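/- arXiv:2205.07175 — 3 statements merged into one kernel-verified Lean document; each statement's English description precedes it below -/
import Mathlib

section
/- Let F be a field of characteristic 0 (or characteristic greater than n), let β ∈ F with β ∉ {0,1,...,n}, and let f ∈ F[x_1,...,x_n] be a multilinear polynomial such that f(x)·(x_1+...+x_n−β) ≡ 1 modulo the ideal generated by x_i²−x_i for all i. Then deg f = n. -/
/-!
For multilinear `f`, the coefficient of `x₁⋯xₙ` is recovered from the values of `f` on the cube
by Möbius inversion, as `∑_T (-1)^(n - |T|) f(1_T)`. The hypothesis forces `f(1_T) = 1/(|T| - β)`,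
so this alternating sum is the `n`-th forward difference of `k ↦ 1/(k - β)` at `0`, namely
`(-1)^n n! / ∏_{k ≤ n} (k - β)`, which is nonzero since `n! ≠ 0` in `F`. Hence `x₁⋯xₙ` occurs in
`f`, while multilinearity bounds the total degree by `n`.
-/

open Finset MvPolynomial fwdDiff

theorem natCast_factorial_ne_zero_of_charZero_or_lt_ringChar {F : Type*} [Field F] {n : ℕ}
    (h : CharZero F ∨ n < ringChar F) : (n.factorial : F) ≠ 0 := by
  rcases h with h | h
  · exact Nat.cast_ne_zero.2 n.factorial_ne_zero
  · have hp : (ringChar F).Prime :=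
      (CharP.char_is_prime_or_zero F (ringChar F)).resolve_right (by omega)
    have := Fact.mk hp
    exact ((IsUnit.natCast_factorial_iff_of_charP (ringChar F)).2 h).ne_zero

theorem fwdDiff_iter_inv_natCast_sub_mul_prod {F : Type*} [Field F] (β : F) (n y : ℕ)
    (h : ∀ k ≤ n, (y : F) + k ≠ β) :
    Δ_[1] ^[n] (fun k : ℕ ↦ ((k : F) - β)⁻¹) y * ∏ k ∈ range (n + 1), ((y : F) + k - β) =
      (-1) ^ n * n.factorial := by
  induction n generalizing y with
  | zero => simpa using inv_mul_cancel₀ (sub_ne_zero.2 (by simpa using h 0 le_rfl))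
  | succ n ih =>
    have hy := ih y fun k hk ↦ h k (by omega)
    have hy1 := ih (y + 1) fun k hk ↦ by
      simpa [add_assoc, add_comm (1 : F)] using h (k + 1) (by omega)
    have hprod_left : ∏ k ∈ range (n + 2), ((y : F) + k - β) =
        (y - β) * ∏ k ∈ range (n + 1), (((y + 1 : ℕ) : F) + k - β) := by
      rw [prod_range_succ', mul_comm]
      congr 1
      · simp
      · exact prod_congr rfl fun k _ ↦ by push_cast; ring
    have hprod_right : ∏ k ∈ range (n + 2), ((y : F) + k - β) =
        (∏ k ∈ range (n + 1), ((y : F) + k - β)) * (y + (n + 1) - β) := by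
      rw [prod_range_succ]; push_cast; ring
    rw [Function.iterate_succ_apply', fwdDiff, Nat.factorial_succ]
    push_cast
    linear_combination (y - β) * hy1 - ((y : F) + (n + 1) - β) * hy
      + Δ_[1] ^[n] (fun k : ℕ ↦ ((k : F) - β)⁻¹) (y + 1) * hprod_left
      - Δ_[1] ^[n] (fun k : ℕ ↦ ((k : F) - β)⁻¹) y * hprod_right

theorem Finset.sum_neg_one_pow_card_compl_smul_eq_fwdDiff_iter {σ G : Type*} [Fintype σ]
    [DecidableEq σ] [AddCommGroup G] (g : ℕ → G) :
    ∑ T : Finset σ, (-1 : ℤ) ^ #Tᶜ • g #T = Δ_[1] ^[Fintype.card σ] g 0 := by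
  simp_rw [card_compl]
  rw [fwdDiff_iter_eq_sum_shift, ← powerset_univ,
    sum_powerset_apply_card (fun m ↦ (-1 : ℤ) ^ (Fintype.card σ - m) • g m), card_univ]
  refine sum_congr rfl fun m _ ↦ ?_
  simp [mul_smul, mul_comm]

theorem Finset.sum_superset_neg_one_pow_card_compl {σ R : Type*} [Fintype σ] [DecidableEq σ]
    [Ring R] (S : Finset σ) :
    ∑ T with S ⊆ T, (-1 : R) ^ #Tᶜ = if S = univ then 1 else 0 := by
  have h : ∑ T with S ⊆ T, (-1 : R) ^ #Tᶜ = ∑ U ∈ Sᶜ.powerset, (-1 : R) ^ #U :=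
    sum_nbij' compl compl (by simp) (by simp [subset_compl_comm]) (by simp) (by simp) (by simp)
  have := congrArg (Int.cast : ℤ → R) (sum_powerset_neg_one_pow_card (x := Sᶜ))
  push_cast at this
  simpa [h] using this

namespace MvPolynomial

variable {σ R : Type*} [DecidableEq σ]

section CommSemiring

variable [CommSemiring R]

theorem eval_indicator_eq_sum_coeff (f : MvPolynomial σ R) (T : Finset σ) :
    eval (fun i ↦ if i ∈ T then 1 else 0) f = ∑ d ∈ f.support with d.support ⊆ T, coeff d f := by
  rw [eval_eq, sum_filter]
  refine sum_congr rfl fun d _ ↦ ?_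
  split_ifs with hd
  · rw [prod_eq_one fun i hi ↦ by rw [if_pos (hd hi), one_pow], mul_one]
  · obtain ⟨i, hi, hiT⟩ := not_subset.1 hd
    rw [prod_eq_zero hi (by rw [if_neg hiT, zero_pow (Finsupp.mem_support_iff.1 hi)]), mul_zero]

theorem totalDegree_le_card_of_degreeOf_le_one [Fintype σ] {f : MvPolynomial σ R}
    (h : ∀ i, degreeOf i f ≤ 1) : f.totalDegree ≤ Fintype.card σ := by
  have hnodup : f.degrees.Nodup :=
    Multiset.nodup_iff_count_le_one.2 fun i ↦ degreeOf_def i f ▸ h i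
  calc f.totalDegree ≤ Multiset.card f.degrees := totalDegree_le_degrees_card f
    _ = #f.degrees.toFinset := (Multiset.toFinset_card_of_nodup hnodup).symm
    _ ≤ Fintype.card σ := card_le_univ _

end CommSemiring

variable [Fintype σ] [CommRing R]

noncomputable def alternatingCubeSum (f : MvPolynomial σ R) : R :=
  ∑ T : Finset σ, (-1) ^ #Tᶜ * eval (fun i ↦ if i ∈ T then 1 else 0) f

theorem alternatingCubeSum_eq_sum_coeff (f : MvPolynomial σ R) :
    alternatingCubeSum f = ∑ d ∈ f.support with d.support = univ, coeff d f := by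
  calc alternatingCubeSum f
      = ∑ T : Finset σ, (-1) ^ #Tᶜ * ∑ d ∈ f.support with d.support ⊆ T, coeff d f := by
        simp only [alternatingCubeSum, eval_indicator_eq_sum_coeff]
    _ = ∑ d ∈ f.support, coeff d f * ∑ T with d.support ⊆ T, (-1 : R) ^ #Tᶜ := by
        simp_rw [sum_filter, mul_sum]
        rw [sum_comm]
        exact sum_congr rfl fun d _ ↦ sum_congr rfl fun T _ ↦ by split_ifs <;> ring
    _ = ∑ d ∈ f.support with d.support = univ, coeff d f := by
        simp_rw [sum_superset_neg_one_pow_card_compl, mul_ite, mul_one, mul_zero, sum_filter]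

theorem card_le_totalDegree_of_alternatingCubeSum_ne_zero {f : MvPolynomial σ R}
    (h : alternatingCubeSum f ≠ 0) : Fintype.card σ ≤ f.totalDegree := by
  rw [alternatingCubeSum_eq_sum_coeff] at h
  obtain ⟨d, hd, -⟩ := exists_ne_zero_of_sum_ne_zero h
  rw [mem_filter] at hd
  calc Fintype.card σ = #d.support := by rw [hd.2, card_univ]
    _ ≤ d.sum fun _ e ↦ e := by
      simpa [Finsupp.sum] using card_nsmul_le_sum d.support d 1 fun i hi ↦
        Nat.one_le_iff_ne_zero.2 (Finsupp.mem_support_iff.1 hi)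
    _ ≤ f.totalDegree := le_totalDegree hd.1

end MvPolynomial

theorem stmt0 (F : Type*) [Field F] (n : ℕ)
    (hchar : CharZero F ∨ n < ringChar F)
    (β : F) (hβ : ∀ i : ℕ, i ≤ n → (i : F) ≠ β)
    (f : MvPolynomial (Fin n) F)
    (hml : ∀ i, MvPolynomial.degreeOf i f ≤ 1)
    (hf : ∀ a : Fin n → F, (∀ i, a i = 0 ∨ a i = 1) →
      (MvPolynomial.eval a f) * ((∑ i, a i) - β) = 1) :
    f.totalDegree = n := by
  have hcube (T : Finset (Fin n)) :
      eval (fun i ↦ if i ∈ T then 1 else 0) f = ((#T : F) - β)⁻¹ := by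
    refine eq_inv_of_mul_eq_one_left ?_
    simpa using hf (fun i ↦ if i ∈ T then 1 else 0) fun i ↦ by by_cases hi : i ∈ T <;> simp [hi]
  have hsum : alternatingCubeSum f = Δ_[1] ^[n] (fun k : ℕ ↦ ((k : F) - β)⁻¹) 0 := by
    simpa [alternatingCubeSum, hcube, zsmul_eq_mul] using
      sum_neg_one_pow_card_compl_smul_eq_fwdDiff_iter (σ := Fin n) fun k : ℕ ↦ ((k : F) - β)⁻¹
  have hprod := fwdDiff_iter_inv_natCast_sub_mul_prod β n 0 (by simpa using hβ)
  have hne : alternatingCubeSum f ≠ 0 := by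
    rw [hsum]
    refine left_ne_zero_of_mul (b := ∏ k ∈ range (n + 1), ((0 : ℕ) + (k : F) - β)) ?_
    rw [hprod]
    exact mul_ne_zero (pow_ne_zero n (by norm_num))
      (natCast_factorial_ne_zero_of_charZero_or_lt_ringChar hchar)
  exact le_antisymm (by simpa using totalDegree_le_card_of_degreeOf_le_one hml)
    (by simpa using card_le_totalDegree_of_alternatingCubeSum_ne_zero hne)
end

section
/- Let F be a field of characteristic 0, β ∈ F with β ∉ {0,1,...,n}, and f the unique multilinear polynomial in F[x_1,...,x_n] satisfying f(a)·(a_1+...+a_n−β)=1 for all a ∈ {0,1}^n. Then for any monomial order, the leading monomial of f is x_1·x_2·...·x_n. -/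
/-!
Evaluating a polynomial at the indicator vector of `T` sums the coefficients of the monomials
supported in `T`; by inclusion–exclusion over the cube, the coefficient of `x₁ ⋯ xₙ` of a
multilinear `f` is `∑_T (-1)^{n-|T|} f(1_T)`. Here `f(1_T) = 1/(|T| - β)`, so this coefficient
is the `n`-th forward difference of `x ↦ 1/(x - β)` at `0`, namely `(-1)ⁿ n! / ∏_{k ≤ n} (k - β)`,
which is nonzero. Every other monomial of `f` divides `x₁ ⋯ xₙ`, and a monomial order extends
divisibility because `0` is its least element.
-/

open Finset Nat

section MonomialOrder

variable {M : Type*} [AddCommMonoid M] [IsLeftCancelAdd M] {le : M → M → Prop} [IsLinearOrder M le]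

theorem zero_le_of_wellFounded (hwell : WellFounded fun a b => le a b ∧ a ≠ b)
    (hadd : ∀ a b c, le a b → le (a + c) (b + c)) (x : M) : le 0 x := by
  by_contra hx
  have hx0 : x ≠ 0 := by rintro rfl; exact hx (refl_of le 0)
  have hxle : le x 0 := (total_of le x 0).resolve_right hx
  -- if `x < 0` then `k • x` would be a strictly decreasing sequence
  have hdesc (k : ℕ) : le ((k + 1) • x) (k • x) ∧ (k + 1) • x ≠ k • x := by
    rw [succ_nsmul]
    exact ⟨by simpa [add_comm] using hadd x 0 (k • x) hxle, fun h => hx0 (add_eq_left.1 h)⟩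
  obtain ⟨_, ⟨k, rfl⟩, hmin⟩ :=
    hwell.has_min (Set.range fun k : ℕ => k • x) ⟨x, 1, one_nsmul x⟩
  exact hmin _ ⟨k + 1, rfl⟩ (hdesc k)

theorem le_add_right_of_wellFounded (hwell : WellFounded fun a b => le a b ∧ a ≠ b)
    (hadd : ∀ a b c, le a b → le (a + c) (b + c)) (a d : M) : le a (a + d) := by
  simpa [add_comm] using hadd 0 d a (zero_le_of_wellFounded hwell hadd d)

end MonomialOrder

theorem fwdDiff_iter_inv {K : Type*} [Field K] (n : ℕ) (y : K) (hy : ∀ k ≤ n, y + k ≠ 0) :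
    (fwdDiff 1)^[n] Inv.inv y = (-1) ^ n * n ! / ∏ k ∈ range (n + 1), (y + k) := by
  induction n generalizing y with
  | zero => simp
  | succ n ih =>
    have hy' : ∀ k ≤ n, y + 1 + k ≠ 0 := fun k hk => by
      simpa [add_assoc, add_comm (1 : K)] using hy (k + 1) (by omega)
    rw [Function.iterate_succ_apply', fwdDiff, ih (y + 1) hy', ih y fun k hk => hy k (by omega)]
    set Q := ∏ k ∈ range n, (y + 1 + k)
    have hA : ∏ k ∈ range (n + 1), (y + k) = Q * y := by
      simp [prod_range_succ', Q, add_assoc, add_comm (1 : K)]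
    have hB : ∏ k ∈ range (n + 1), (y + 1 + k) = Q * (y + 1 + n) := prod_range_succ _ n
    have hC : ∏ k ∈ range (n + 2), (y + k) = Q * (y + 1 + n) * y := by
      rw [prod_range_succ', ← hB]
      simp [add_assoc, add_comm (1 : K)]
    have hQ : Q ≠ 0 := prod_ne_zero_iff.2 fun k hk => hy' k (by simp at hk; omega)
    have hy0 : y ≠ 0 := by simpa using hy 0 (by omega)
    have hyn : y + 1 + n ≠ 0 := hy' n le_rfl
    rw [hA, hB, hC, factorial_succ]
    field_simp
    push_cast
    ring

theorem fwdDiff_iter_inv_ne_zero {K : Type*} [Field K] [CharZero K] (n : ℕ) (y : K)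
    (hy : ∀ k ≤ n, y + k ≠ 0) : (fwdDiff 1)^[n] Inv.inv y ≠ 0 := by
  rw [fwdDiff_iter_inv n y hy]
  refine div_ne_zero (mul_ne_zero (pow_ne_zero _ (neg_ne_zero.2 one_ne_zero)) ?_) ?_
  · exact_mod_cast factorial_ne_zero n
  · exact prod_ne_zero_iff.2 fun k hk => hy k (by simp at hk; omega)

theorem fwdDiff_iter_eq_sum_finset {σ M G : Type*} [Fintype σ] [DecidableEq σ] [AddCommMonoid M]
    [AddCommGroup G] (h : M) (f : M → G) (y : M) :
    (fwdDiff h)^[Fintype.card σ] f y = ∑ T : Finset σ, (-1 : ℤ) ^ #Tᶜ • f (y + #T • h) := by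
  rw [fwdDiff_iter_eq_sum_shift, ← powerset_univ]
  simp_rw [card_compl]
  have := sum_powerset_apply_card (x := (univ : Finset σ))
    fun k => (-1 : ℤ) ^ (Fintype.card σ - k) • f (y + k • h)
  rw [this, Finset.card_univ]
  refine sum_congr rfl fun k _ => ?_
  rw [mul_comm, mul_smul, natCast_zsmul]

namespace MvPolynomial

variable {σ R : Type*} [DecidableEq σ]

theorem eval_boole_mem [CommSemiring R] (f : MvPolynomial σ R) (T : Finset σ) :
    eval (fun i => if i ∈ T then 1 else 0) f = ∑ m ∈ f.support with m.support ⊆ T, coeff m f := by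
  rw [eval_eq, sum_filter]
  refine sum_congr rfl fun m _ => ?_
  have hprod : ∏ i ∈ m.support, (if i ∈ T then (1 : R) else 0) ^ m i
      = ∏ i ∈ m.support, if i ∈ T then 1 else 0 :=
    prod_congr rfl fun i hi => by
      split_ifs
      · exact one_pow _
      · exact zero_pow (Finsupp.mem_support_iff.1 hi)
  rw [hprod, prod_boole, mul_ite, mul_one, mul_zero]
  rfl

variable [Fintype σ]

theorem sum_neg_one_pow_card_compl_boole_subset [Ring R] (U : Finset σ) :
    ∑ T : Finset σ, (if U ⊆ T then (-1 : R) ^ #Tᶜ else 0) = if U = univ then 1 else 0 := by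
  rw [← Equiv.sum_comp (compl_involutive.toPerm _)]
  simp only [Function.Involutive.coe_toPerm, compl_compl, subset_compl_comm (s := U)]
  rw [← sum_filter, filter_subset_univ]
  have := congrArg (Int.cast : ℤ → R) (sum_powerset_neg_one_pow_card (x := Uᶜ))
  push_cast at this
  simp only [this, compl_eq_empty_iff]

theorem sum_neg_one_pow_card_compl_mul_eval_boole_mem [CommRing R] (f : MvPolynomial σ R) :
    ∑ T : Finset σ, (-1) ^ #Tᶜ * eval (fun i => if i ∈ T then 1 else 0) f
      = ∑ m ∈ f.support with m.support = univ, coeff m f := by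
  simp_rw [eval_boole_mem, mul_sum, sum_filter]
  rw [sum_comm]
  refine sum_congr rfl fun m _ => ?_
  simp_rw [← ite_zero_mul, ← sum_mul, sum_neg_one_pow_card_compl_boole_subset, ite_mul,
    one_mul, zero_mul]

theorem le_sum_single_one_of_mem_support [CommSemiring R] {f : MvPolynomial σ R}
    (hf : ∀ i, degreeOf i f ≤ 1) {m : σ →₀ ℕ} (hm : m ∈ f.support) :
    m ≤ ∑ i, Finsupp.single i 1 := fun i => by
  simpa [Finsupp.single_apply] using (monomial_le_degreeOf i hm).trans (hf i)

theorem coeff_sum_single_one_eq_sum_neg_one_pow_mul_eval [CommRing R] {f : MvPolynomial σ R}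
    (hf : ∀ i, degreeOf i f ≤ 1) :
    coeff (∑ i, Finsupp.single i 1) f
      = ∑ T : Finset σ, (-1) ^ #Tᶜ * eval (fun i => if i ∈ T then 1 else 0) f := by
  have hone (i : σ) : (∑ j, Finsupp.single j 1 : σ →₀ ℕ) i = 1 := by simp [Finsupp.single_apply]
  have hfilter : {m ∈ f.support | m.support = univ}
      = {m ∈ f.support | m = ∑ i, Finsupp.single i 1} := by
    refine filter_congr fun m hm => ⟨fun h => ?_, ?_⟩
    · ext i
      have := le_sum_single_one_of_mem_support hf hm i
      have := Finsupp.mem_support_iff.1 (h ▸ mem_univ i)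
      rw [hone] at *
      omega
    · rintro rfl
      ext i
      simp [hone]
  rw [sum_neg_one_pow_card_compl_mul_eval_boole_mem, hfilter, filter_eq']
  split_ifs with h
  · rw [sum_singleton]
  · rw [sum_empty, notMem_support_iff.1 h]

end MvPolynomial

open MvPolynomial in
theorem stmt1 (F : Type*) [Field F] [CharZero F] (n : ℕ)
    (β : F) (hβ : ∀ i : ℕ, i ≤ n → (i : F) ≠ β)
    (f : MvPolynomial (Fin n) F)
    (hml : ∀ i, MvPolynomial.degreeOf i f ≤ 1)
    (hf : ∀ a : Fin n → F, (∀ i, a i = 0 ∨ a i = 1) →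
      (MvPolynomial.eval a f) * ((∑ i, a i) - β) = 1)
    (le : (Fin n →₀ ℕ) → (Fin n →₀ ℕ) → Prop)
    (hlin : IsLinearOrder _ le)
    (hwell : WellFounded (fun a b => le a b ∧ a ≠ b))
    (hadd : ∀ a b c, le a b → le (a + c) (b + c)) :
    (∑ i, Finsupp.single i 1) ∈ f.support ∧
      ∀ m ∈ f.support, le m (∑ i, Finsupp.single i 1) := by
  classical
  have hcube (T : Finset (Fin n)) :
      eval (fun i => if i ∈ T then 1 else 0) f = (-β + #T • (1 : F))⁻¹ := by
    have h := hf (fun i => if i ∈ T then 1 else 0) fun i => by split_ifs <;> simp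
    rw [sum_boole, filter_mem_eq_inter, univ_inter] at h
    exact eq_inv_of_mul_eq_one_left (by rwa [nsmul_one, neg_add_eq_sub])
  have hβ' (k : ℕ) (hk : k ≤ n) : -β + k ≠ 0 := by
    rw [neg_add_eq_sub]
    exact sub_ne_zero.2 (hβ k hk)
  refine ⟨?_, fun m hm => ?_⟩
  · rw [mem_support_iff, coeff_sum_single_one_eq_sum_neg_one_pow_mul_eval hml]
    simp_rw [hcube]
    have hsum := fwdDiff_iter_eq_sum_finset (σ := Fin n) (1 : F) Inv.inv (-β)
    simp only [zsmul_eq_mul, Int.cast_pow, Int.cast_neg, Int.cast_one] at hsum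
    rw [← hsum, Fintype.card_fin]
    exact fwdDiff_iter_inv_ne_zero n (-β) hβ'
  · obtain ⟨d, hd⟩ := exists_add_of_le (le_sum_single_one_of_mem_support hml hm)
    have := hlin
    exact hd ▸ le_add_right_of_wellFounded hwell hadd m d
end

section
/- Let w ∈ ℤ^d be a balanced word such that |w_i| ≤ b for every i ∈ [d]. Then |Σ_{i=1}^d w_i| ≤ b. -/
/-!
Let `P` be the total length of the positive intervals and `N` that of the negative ones, so that
`∑ wᵢ = P - N`. The last positive interval is `(P - w_{i₀}, P]`, and every negative interval lies in
`(0, N]`; since the former meets one of the latter, `P - w_{i₀} < N`, i.e. `P - N < w_{i₀} ≤ b`.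
Symmetrically, the last negative interval gives `N - P < |w_{j₀}| ≤ b`.
-/

def posIdx (d : ℕ) (w : Fin d → ℤ) : Finset (Fin d) :=
  Finset.univ.filter fun i => 0 ≤ w i

def negIdx (d : ℕ) (w : Fin d → ℤ) : Finset (Fin d) :=
  Finset.univ.filter fun i => w i < 0

noncomputable def Aint {d : ℕ} (w : Fin d → ℤ) (i : Fin d) : Finset ℤ :=
  Finset.Ioc (∑ i' ∈ (posIdx d w).filter (fun i' => i' < i), w i')
             (∑ i' ∈ (posIdx d w).filter (fun i' => i' ≤ i), w i')

noncomputable def Bint {d : ℕ} (w : Fin d → ℤ) (j : Fin d) : Finset ℤ :=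
  Finset.Ioc (∑ j' ∈ (negIdx d w).filter (fun j' => j' < j), |w j'|)
             (∑ j' ∈ (negIdx d w).filter (fun j' => j' ≤ j), |w j'|)

def BalancedWord {d : ℕ} (w : Fin d → ℤ) : Prop :=
  (∀ i ∈ posIdx d w, ∃ j ∈ negIdx d w, ((Aint w i) ∩ (Bint w j)).Nonempty) ∧
  (∀ j ∈ negIdx d w, ∃ i ∈ posIdx d w, ((Aint w i) ∩ (Bint w j)).Nonempty)

open Finset

section BlockInterval

variable {ι : Type*} [LinearOrder ι]

/-- Lay the blocks `f i`, `i ∈ s`, end to end in increasing order of `i`; this is the block of `i`.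
`Aint` and `Bint` are the instances `s = posIdx d w, f = w` and `s = negIdx d w, f = |w|`. -/
noncomputable def blockInterval (s : Finset ι) (f : ι → ℤ) (i : ι) : Finset ℤ :=
  Ioc (∑ i' ∈ s.filter (· < i), f i') (∑ i' ∈ s.filter (· ≤ i), f i')

lemma le_sum_of_mem_blockInterval {s : Finset ι} {f : ι → ℤ} {i : ι} {x : ℤ}
    (hf : ∀ i ∈ s, 0 ≤ f i) (hx : x ∈ blockInterval s f i) : x ≤ ∑ i ∈ s, f i :=
  (mem_Ioc.1 hx).2.trans <|
    sum_le_sum_of_subset_of_nonneg (filter_subset _ _) fun i hi _ => hf i hi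

lemma blockInterval_max' (s : Finset ι) (f : ι → ℤ) (hs : s.Nonempty) :
    blockInterval s f (s.max' hs) = Ioc (∑ i ∈ s, f i - f (s.max' hs)) (∑ i ∈ s, f i) := by
  have hlt : s.filter (· < s.max' hs) = s.erase (s.max' hs) := by
    ext i
    simp only [mem_filter, mem_erase]
    exact ⟨fun ⟨hi, hlt⟩ => ⟨hlt.ne, hi⟩, fun ⟨hne, hi⟩ => ⟨hi, (s.le_max' i hi).lt_of_ne hne⟩⟩
  have hle : s.filter (· ≤ s.max' hs) = s := filter_true_of_mem fun i hi => s.le_max' i hi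
  rw [blockInterval, hlt, hle, ← sum_erase_add s f (s.max'_mem hs), add_sub_cancel_right]

lemma sum_sub_sum_lt_of_blockInterval_max'_meets {s t : Finset ι} {f g : ι → ℤ}
    (hs : s.Nonempty) (hg : ∀ j ∈ t, 0 ≤ g j) {j : ι}
    (hmeet : (blockInterval s f (s.max' hs) ∩ blockInterval t g j).Nonempty) :
    ∑ i ∈ s, f i - ∑ j ∈ t, g j < f (s.max' hs) := by
  obtain ⟨x, hx⟩ := hmeet
  rw [mem_inter, blockInterval_max', mem_Ioc] at hx
  have hxt := le_sum_of_mem_blockInterval hg hx.2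
  linarith [hx.1.1]

lemma sum_sub_sum_le_of_forall_blockInterval_meets {s t : Finset ι} {f g : ι → ℤ} {b : ℤ}
    (hb0 : 0 ≤ b) (hfb : ∀ i ∈ s, f i ≤ b) (hg : ∀ j ∈ t, 0 ≤ g j)
    (hmeet : ∀ i ∈ s, ∃ j ∈ t, (blockInterval s f i ∩ blockInterval t g j).Nonempty) :
    ∑ i ∈ s, f i - ∑ j ∈ t, g j ≤ b := by
  obtain rfl | hs := s.eq_empty_or_nonempty
  · linarith [sum_nonneg hg, sum_empty (f := f)]
  obtain ⟨j, -, hj⟩ := hmeet _ (s.max'_mem hs)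
  linarith [sum_sub_sum_lt_of_blockInterval_max'_meets hs hg hj, hfb _ (s.max'_mem hs)]

end BlockInterval

lemma sum_eq_sum_posIdx_sub_sum_negIdx {d : ℕ} (w : Fin d → ℤ) :
    ∑ i, w i = ∑ i ∈ posIdx d w, w i - ∑ j ∈ negIdx d w, |w j| := by
  have hneg : ∑ j ∈ negIdx d w, |w j| = -∑ j ∈ negIdx d w, w j := by
    rw [← sum_neg_distrib]
    exact sum_congr rfl fun j hj => abs_of_neg (mem_filter.1 hj).2
  have hcompl : univ.filter (fun i => ¬ 0 ≤ w i) = negIdx d w := by simp [negIdx]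
  rw [hneg, sub_neg_eq_add, posIdx, ← hcompl, sum_filter_add_sum_filter_not]

theorem stmt5 {d : ℕ} (w : Fin d → ℤ) (b : ℕ)
    (hbal : BalancedWord w) (hb : ∀ i, |w i| ≤ (b : ℤ)) :
    |∑ i, w i| ≤ (b : ℤ) := by
  have hb0 : (0 : ℤ) ≤ b := b.cast_nonneg
  have hpos : ∑ i ∈ posIdx d w, w i - ∑ j ∈ negIdx d w, |w j| ≤ b :=
    sum_sub_sum_le_of_forall_blockInterval_meets hb0 (fun i _ => (le_abs_self _).trans (hb i))
      (fun j _ => abs_nonneg _) hbal.1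
  have hneg : ∑ j ∈ negIdx d w, |w j| - ∑ i ∈ posIdx d w, w i ≤ b :=
    sum_sub_sum_le_of_forall_blockInterval_meets hb0 (fun j _ => hb j)
      (fun i hi => (mem_filter.1 hi).2) fun j hj => by
        obtain ⟨i, hi, hmeet⟩ := hbal.2 j hj
        exact ⟨i, hi, inter_comm (Aint w i) (Bint w j) ▸ hmeet⟩
  rw [sum_eq_sum_posIdx_sub_sum_negIdx, abs_le]
  constructor <;> linarith
end
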